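/- For z = (z_1,…,z_h) ∈ ℂ^h let ω(z) = δ_0 + Σ_{i=1}^h z_i·δ_i ∈ ℂ^{2h+2}. Then the following are equivalent: (a) the number √−1·⟨ω(z), conj(ω(z))⟩ is a positive real number, and for every nonzero u in the ℂ-span of {δ_0, δ_1, …, δ_h} with ⟨u, conj(ω(z))⟩ = 0, the number √−1·⟨u, conj(u)⟩ is a negative real number; (b) Σ_{i=1}^h |z_i|² < 1. In other words, the locus where the Hodge–Riemann inequalities hold for this family is exactly the h-dimensional complex unit ball. -/

import Mathlib

/-- The symplectic form on `ℂ^{2h+2}` in the complex basis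
`ε_0, …, ε_h, δ_0, …, δ_h` (a vector is recorded as the pair of its `ε`-coordinates
and its `δ`-coordinates): `⟨ε_i, ε_j⟩ = ⟨δ_i, δ_j⟩ = 0`, `⟨ε_0, δ_0⟩ = 2√−1`, and
`⟨ε_i, δ_i⟩ = −2√−1` for `1 ≤ i ≤ h`. -/
noncomputable def symB {h : ℕ} (x y : (Fin (h+1) → ℂ) × (Fin (h+1) → ℂ)) : ℂ :=
  2 * Complex.I * (x.1 0 * y.2 0 - x.2 0 * y.1 0)
    - 2 * Complex.I *
        ∑ i : Fin h, (x.1 i.succ * y.2 i.succ - x.2 i.succ * y.1 i.succ)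

/-- The antilinear involution determined by `conj ε_i = δ_i`, `conj δ_i = ε_i`. -/
noncomputable def conjB {h : ℕ} (x : (Fin (h+1) → ℂ) × (Fin (h+1) → ℂ)) :
    (Fin (h+1) → ℂ) × (Fin (h+1) → ℂ) :=
  (fun j => starRingEnd ℂ (x.2 j), fun j => starRingEnd ℂ (x.1 j))

/-- The basis vector `δ_j`. -/
noncomputable def deltaVec {h : ℕ} (j : Fin (h+1)) :
    (Fin (h+1) → ℂ) × (Fin (h+1) → ℂ) :=
  (0, Pi.single j 1)

/-- `ω(z) = δ_0 + Σᵢ z_i·δ_i`. -/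
noncomputable def omB {h : ℕ} (z : Fin h → ℂ) :
    (Fin (h+1) → ℂ) × (Fin (h+1) → ℂ) :=
  (0, Fin.cons 1 z)

/-! On the `δ`-span the Hermitian form `√−1·⟨x, conj x⟩` is `2(|x_0|² − Σᵢ|x_i|²)`; at `ω(z)` it
equals `2(1 − Σᵢ|z_i|²)`. A vector `u` of the `δ`-span satisfies `⟨u, conj ω(z)⟩ = 0` exactly when
`u_0 = Σᵢ u_i·conj z_i`, and then Cauchy–Schwarz gives `|u_0|² ≤ Σᵢ|u_i|² · Σᵢ|z_i|² < Σᵢ|u_i|²`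
inside the unit ball. -/

open Complex ComplexConjugate

lemma fst_eq_zero_of_mem_span_deltaVec {h : ℕ} {u : (Fin (h+1) → ℂ) × (Fin (h+1) → ℂ)}
    (hu : u ∈ Submodule.span ℂ (Set.range (deltaVec (h := h)))) : u.1 = 0 := by
  have hle : Submodule.span ℂ (Set.range (deltaVec (h := h))) ≤ (⊥ : Submodule ℂ _).prod ⊤ := by
    rw [Submodule.span_le]
    rintro _ ⟨j, rfl⟩
    exact ⟨rfl, trivial⟩
  exact (hle hu).1

lemma I_mul_symB_conjB_self {h : ℕ} (x : (Fin (h+1) → ℂ) × (Fin (h+1) → ℂ)) :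
    I * symB x (conjB x) = ((2 * (normSq (x.2 0) - normSq (x.1 0))
      - 2 * ∑ i : Fin h, (normSq (x.2 i.succ) - normSq (x.1 i.succ)) : ℝ) : ℂ) := by
  simp only [symB, conjB, mul_conj]
  push_cast [Finset.sum_sub_distrib]
  linear_combination (2 * (normSq (x.1 0) - normSq (x.2 0) : ℂ)
    - 2 * ∑ i : Fin h, (normSq (x.1 i.succ) : ℂ) + 2 * ∑ i : Fin h, (normSq (x.2 i.succ) : ℂ)) * I_sq

lemma I_mul_symB_conjB_omB {h : ℕ} (z : Fin h → ℂ) :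
    I * symB (omB z) (conjB (omB z)) = ((2 - 2 * ∑ i, normSq (z i) : ℝ) : ℂ) := by
  simp [I_mul_symB_conjB_self, omB]

lemma symB_conjB_omB {h : ℕ} (u : (Fin (h+1) → ℂ) × (Fin (h+1) → ℂ)) (z : Fin h → ℂ) :
    symB u (conjB (omB z)) = -2 * I * (u.2 0 - ∑ i, u.2 i.succ * conj (z i)) := by
  simp only [symB, conjB, omB, Pi.zero_apply, map_zero, map_one, Fin.cons_zero,
    Fin.cons_succ, mul_zero, mul_one, zero_sub, Finset.sum_neg_distrib]
  ring

lemma normSq_sum_mul_conj_le {ι : Type*} [Fintype ι] (w z : ι → ℂ) :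
    normSq (∑ i, w i * conj (z i)) ≤ (∑ i, normSq (w i)) * ∑ i, normSq (z i) := by
  have h := norm_inner_le_norm (𝕜 := ℂ) (WithLp.toLp 2 z) (WithLp.toLp 2 w)
  rw [PiLp.inner_apply, EuclideanSpace.norm_eq, EuclideanSpace.norm_eq] at h
  simp only [RCLike.inner_apply] at h
  have h2 := pow_le_pow_left₀ (norm_nonneg _) h 2
  rw [mul_pow, Real.sq_sqrt (by positivity), Real.sq_sqrt (by positivity)] at h2
  simpa [← Complex.sq_norm, mul_comm] using h2

lemma normSq_sum_mul_conj_lt {ι : Type*} [Fintype ι] {w z : ι → ℂ} (hw : w ≠ 0)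
    (hz : ∑ i, normSq (z i) < 1) :
    normSq (∑ i, w i * conj (z i)) < ∑ i, normSq (w i) := by
  have hpos : 0 < ∑ i, normSq (w i) := by
    refine lt_of_le_of_ne (Finset.sum_nonneg fun i _ => normSq_nonneg (w i))
      fun hzero => hw (funext fun i => ?_)
    have := (Fintype.sum_eq_zero_iff_of_nonneg fun i => normSq_nonneg (w i)).1 hzero.symm
    exact normSq_eq_zero.1 (congrFun this i)
  calc normSq (∑ i, w i * conj (z i)) ≤ (∑ i, normSq (w i)) * ∑ i, normSq (z i) :=
        normSq_sum_mul_conj_le w z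
    _ < ∑ i, normSq (w i) := mul_lt_of_lt_one_right hpos hz

theorem stmt14_general {h : ℕ} (z : Fin h → ℂ) :
    ((∃ r : ℝ, 0 < r ∧ Complex.I * symB (omB z) (conjB (omB z)) = (r : ℂ)) ∧
      (∀ u ∈ Submodule.span ℂ (Set.range (deltaVec (h := h))), u ≠ 0 →
        symB u (conjB (omB z)) = 0 →
        ∃ r : ℝ, r < 0 ∧ Complex.I * symB u (conjB u) = (r : ℂ))) ↔
      ∑ i, Complex.normSq (z i) < 1 := by
  constructor
  · rintro ⟨⟨r, hr, hre⟩, -⟩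
    rw [I_mul_symB_conjB_omB] at hre
    linarith [ofReal_injective hre]
  · intro hz
    refine ⟨⟨_, by linarith, I_mul_symB_conjB_omB z⟩, fun u hu hu0 hperp => ?_⟩
    have hfst := fst_eq_zero_of_mem_span_deltaVec hu
    have hhead : u.2 0 = ∑ i, u.2 i.succ * conj (z i) := by
      rw [symB_conjB_omB] at hperp
      simpa [sub_eq_zero, I_ne_zero] using hperp
    have htail : (fun i : Fin h => u.2 i.succ) ≠ 0 := by
      intro htail
      refine hu0 (Prod.ext hfst (funext fun j => Fin.cases ?_ (congrFun htail) j))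
      simp [hhead, congrFun htail]
    refine ⟨_, ?_, I_mul_symB_conjB_self u⟩
    have := normSq_sum_mul_conj_lt htail hz
    simp only [hfst, Pi.zero_apply, map_zero, sub_zero, ← hhead] at this ⊢
    linarith

/-- For the family `ω(z) = δ_0 + Σ z_i δ_i` (the case `Φ ≡ 0`), the Hodge–Riemann
inequalities hold at `z` if and only if `Σᵢ |z_i|² < 1`: the locus is the
`h`-dimensional complex unit ball. -/
theorem stmt14 {h : ℕ} (hh : 1 ≤ h) (z : Fin h → ℂ) :
    ((∃ r : ℝ, 0 < r ∧ Complex.I * symB (omB z) (conjB (omB z)) = (r : ℂ)) ∧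
      (∀ u ∈ Submodule.span ℂ (Set.range (deltaVec (h := h))), u ≠ 0 →
        symB u (conjB (omB z)) = 0 →
        ∃ r : ℝ, r < 0 ∧ Complex.I * symB u (conjB u) = (r : ℂ))) ↔
      ∑ i, Complex.normSq (z i) < 1 :=
  stmt14_general z
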